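/- A Boolean network f : {0,1}^n → {0,1}^n is fixable (admits a word w such that f^w(x) is a fixed point of f for every x) if and only if, in the asynchronous graph Γ(f), every state has a directed path to some fixed point of f. -/
import Mathlib


/-- One asynchronous update step: replace coordinate `i` of `x` by `f x i`. -/
def updateStep {n : ℕ} (f : (Fin n → Bool) → (Fin n → Bool)) (x : Fin n → Bool)
    (i : Fin n) : Fin n → Bool :=
  Function.update x i (f x i)

/-- Action of a word on a state. -/
def applyWord {n : ℕ} (f : (Fin n → Bool) → (Fin n → Bool)) :
    List (Fin n) → (Fin n → Bool) → (Fin n → Bool)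
  | [], x => x
  | i :: w, x => applyWord f w (updateStep f x i)

/-- A word `w` fixes `f` if applying it to any state yields a fixed point of `f`. -/
def Fixes {n : ℕ} (f : (Fin n → Bool) → (Fin n → Bool)) (w : List (Fin n)) : Prop :=
  ∀ x, f (applyWord f w x) = applyWord f w x

/-- Arc of the asynchronous graph. -/
def AsyncArc {n : ℕ} (f : (Fin n → Bool) → (Fin n → Bool))
    (x y : Fin n → Bool) : Prop :=
  ∃ i : Fin n, f x i ≠ x i ∧ y = Function.update x i (f x i)

/-- `w` is induced by a path of the `n`-cube. -/
def IsPathWord (n : ℕ) (w : List (Fin n)) : Prop :=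
  ∃ xs : List (Fin n → Bool), xs.Nodup ∧ xs.length = w.length + 1 ∧
    ∀ k (hk : k < w.length),
      xs.getD (k + 1) default =
        Function.update (xs.getD k default) (w.get ⟨k, hk⟩)
          (!(xs.getD k default (w.get ⟨k, hk⟩)))

/-- `W` contains every `n`-path-word as a subword. -/
def PathUniversal (n : ℕ) (W : List (Fin n)) : Prop :=
  ∀ w : List (Fin n), IsPathWord n w → w.Sublist W

lemma applyWord_append {n : ℕ} (f : (Fin n → Bool) → (Fin n → Bool))
    (w u : List (Fin n)) (x : Fin n → Bool) :
    applyWord f (w ++ u) x = applyWord f u (applyWord f w x) := by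
  induction w generalizing x with
  | nil => rfl
  | cons i w ih => simp [applyWord, ih]

lemma applyWord_fixed {n : ℕ} (f : (Fin n → Bool) → (Fin n → Bool))
    {y : Fin n → Bool} (hy : f y = y) (w : List (Fin n)) :
    applyWord f w y = y := by
  induction w with
  | nil => rfl
  | cons i w ih =>
    have : updateStep f y i = y := by
      simp [updateStep, hy, Function.update_eq_self]
    simp [applyWord, this, ih]

lemma word_of_path {n : ℕ} (f : (Fin n → Bool) → (Fin n → Bool))
    {x y : Fin n → Bool} (h : Relation.ReflTransGen (AsyncArc f) x y) :
    ∃ u : List (Fin n), applyWord f u x = y := by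
  induction h using Relation.ReflTransGen.head_induction_on with
  | refl => exact ⟨[], rfl⟩
  | head harc _ ih =>
    obtain ⟨u, hu⟩ := ih
    obtain ⟨i, _, hz⟩ := harc
    exact ⟨i :: u, by simp [applyWord, updateStep, ← hz, hu]⟩

lemma path_of_word {n : ℕ} (f : (Fin n → Bool) → (Fin n → Bool))
    (w : List (Fin n)) (x : Fin n → Bool) :
    Relation.ReflTransGen (AsyncArc f) x (applyWord f w x) := by
  induction w generalizing x with
  | nil => exact Relation.ReflTransGen.refl
  | cons i w ih =>
    by_cases h : f x i = x i
    · have : updateStep f x i = x := by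
        simp [updateStep, h, Function.update_eq_self]
      simpa [applyWord, this] using ih x
    · exact Relation.ReflTransGen.head ⟨i, h, rfl⟩ (ih (updateStep f x i))

/-- `f` is fixable iff in the asynchronous graph every state has a
directed path to some fixed point of `f`. -/
theorem fixable_iff_path_to_fixed_point (n : ℕ)
    (f : (Fin n → Bool) → (Fin n → Bool)) :
    (∃ w : List (Fin n), Fixes f w) ↔
      ∀ x : Fin n → Bool, ∃ y : Fin n → Bool,
        f y = y ∧ Relation.ReflTransGen (AsyncArc f) x y := by
  constructor
  · rintro ⟨w, hw⟩ x
    exact ⟨applyWord f w x, hw x, path_of_word f w x⟩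
  · intro h
    -- build a word fixing all states in a finite list
    have key : ∀ L : List (Fin n → Bool), ∃ w : List (Fin n),
        ∀ x ∈ L, f (applyWord f w x) = applyWord f w x := by
      intro L
      induction L with
      | nil => exact ⟨[], by simp⟩
      | cons x L ih =>
        obtain ⟨w, hw⟩ := ih
        obtain ⟨y, hy, hpath⟩ := h (applyWord f w x)
        obtain ⟨u, hu⟩ := word_of_path f hpath
        refine ⟨w ++ u, ?_⟩
        intro z hz
        rcases List.mem_cons.mp hz with rfl | hz
        · rw [applyWord_append, hu, hy]
        · rw [applyWord_append, applyWord_fixed f (hw z hz) u]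
          exact hw z hz
    obtain ⟨w, hw⟩ := key (Finset.univ : Finset (Fin n → Bool)).toList
    exact ⟨w, fun x => hw x (by simp)⟩
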